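/- Suppose a bridge assumption holds: conditional on the history and on the event G_t that some offspring at iteration t lands in a fixed measurable set A, a success event B_t occurs with conditional probability at least ρ ∈ (0,1]. Then P(B_t | H_t) ≥ ρ·P(G_t | H_t), and consequently the probability that B_t fails at every iteration t ≤ T is at most ∏_{t=1}^T (1 − ρ·[1−(1−α·π₀(A))^{n_t}]). -/

import Mathlib

/-!
Averaging the bridge inequality `ρ · 1_G ≤ P(B | H_t ⊔ σ(G))` down to `H_t` (tower property)
gives `ρ · P(G | H_t) ≤ P(B | H_t)`. The event that `B` has failed before `t` is
`H_t`-measurable, so integrating the conditional failure probability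
`1 - P(B_t | H_t) ≤ 1 - ρ q_t` over it, where `q_t = 1 - (1 - α π₀(A))^(n_t)` is the sampling
lower bound on `P(G_t | H_t)`, peels off one factor of the product per iteration.
-/

namespace MeasureTheory

variable {Ω : Type*} {m m' mΩ : MeasurableSpace Ω} {μ : Measure Ω}

theorem condExp_indicator_one_nonneg (s : Set Ω) :
    0 ≤ᵐ[μ] μ[s.indicator (fun _ => (1 : ℝ)) | m] :=
  condExp_nonneg (ae_of_all μ (Set.indicator_nonneg fun _ _ => zero_le_one))

theorem ae_mul_condExp_indicator_le_condExp_indicator [IsFiniteMeasure μ] (hm : m ≤ m')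
    (hm' : m' ≤ mΩ) {G B : Set Ω} (hG : MeasurableSet G) {ρ : ℝ}
    (h : ∀ᵐ ω ∂μ, ω ∈ G → ρ ≤ μ[B.indicator (fun _ => (1 : ℝ)) | m'] ω) :
    ∀ᵐ ω ∂μ, ρ * μ[G.indicator (fun _ => (1 : ℝ)) | m] ω ≤
      μ[B.indicator (fun _ => (1 : ℝ)) | m] ω := by
  have hG_le : ρ • G.indicator (fun _ => (1 : ℝ)) ≤ᵐ[μ] μ[B.indicator (fun _ => 1) | m'] := by
    filter_upwards [h, condExp_indicator_one_nonneg (m := m') B] with ω hρ hnonneg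
    by_cases hω : ω ∈ G
    · simpa [hω] using hρ hω
    · simpa [hω] using hnonneg
  filter_upwards [condExp_mono (m := m) (((integrable_const (1 : ℝ)).indicator hG).smul ρ)
      integrable_condExp hG_le, condExp_smul ρ (G.indicator (fun _ => (1 : ℝ))) m,
      condExp_condExp_of_le (μ := μ) (f := B.indicator (fun _ => (1 : ℝ))) hm hm']
    with ω hmono hsmul htower
  rw [hsmul, htower] at hmono
  exact hmono

theorem measure_inter_le_ofReal_mul_of_condExp_indicator_le [IsFiniteMeasure μ]
    (hm : m ≤ mΩ) {S E : Set Ω} (hS : MeasurableSet[m] S) (hE : MeasurableSet E) {c : ℝ}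
    (h : ∀ᵐ ω ∂μ, μ[E.indicator (fun _ => (1 : ℝ)) | m] ω ≤ c) :
    μ (S ∩ E) ≤ ENNReal.ofReal c * μ S := by
  have hreal : μ.real (S ∩ E) ≤ c * μ.real S :=
    calc μ.real (S ∩ E) = ∫ ω in S, E.indicator (fun _ => (1 : ℝ)) ω ∂μ := by
          rw [integral_indicator_const _ hE, measureReal_restrict_apply hE, Set.inter_comm,
            smul_eq_mul, mul_one]
      _ = ∫ ω in S, μ[E.indicator (fun _ => (1 : ℝ)) | m] ω ∂μ :=
          (setIntegral_condExp hm ((integrable_const (1 : ℝ)).indicator hE) hS).symm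
      _ ≤ ∫ _ in S, c ∂μ :=
          integral_mono_ae integrable_condExp.integrableOn
            (integrableOn_const (measure_ne_top μ S)) (ae_restrict_of_ae h)
      _ = c * μ.real S := by simp [mul_comm]
  calc μ (S ∩ E) = ENNReal.ofReal (μ.real (S ∩ E)) :=
        (ofReal_measureReal (measure_ne_top μ _)).symm
    _ ≤ ENNReal.ofReal (c * μ.real S) := ENNReal.ofReal_le_ofReal hreal
    _ = ENNReal.ofReal c * μ S := by
        rw [ENNReal.ofReal_mul' measureReal_nonneg, ofReal_measureReal (measure_ne_top μ _)]

theorem condExp_indicator_compl_ae_eq [IsFiniteMeasure μ] (hm : m ≤ mΩ) {s : Set Ω}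
    (hs : MeasurableSet s) :
    μ[sᶜ.indicator (fun _ => (1 : ℝ)) | m] =ᵐ[μ]
      fun ω => 1 - μ[s.indicator (fun _ => (1 : ℝ)) | m] ω := by
  rw [Set.indicator_compl]
  filter_upwards [condExp_sub (integrable_const (1 : ℝ))
    ((integrable_const (1 : ℝ)).indicator hs) m] with ω hω
  rw [hω, Pi.sub_apply, condExp_const hm]

theorem measure_biInter_range_compl_le_prod [IsProbabilityMeasure μ] (ℱ : Filtration ℕ mΩ)
    {B : ℕ → Set Ω}
    (hB : ∀ t, MeasurableSet[ℱ (t + 1)] (B t)) {p : ℕ → ℝ}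
    (hp : ∀ t, ∀ᵐ ω ∂μ, p t ≤ μ[(B t).indicator (fun _ => (1 : ℝ)) | ℱ t] ω) (T : ℕ) :
    μ (⋂ t ∈ Finset.range T, (B t)ᶜ) ≤ ENNReal.ofReal (∏ t ∈ Finset.range T, (1 - p t)) := by
  induction T with
  | zero => simp
  | succ T ih =>
    have hcompl : ∀ᵐ ω ∂μ, μ[(B T)ᶜ.indicator (fun _ => (1 : ℝ)) | ℱ T] ω ≤ 1 - p T := by
      filter_upwards [condExp_indicator_compl_ae_eq (ℱ.le T) (ℱ.le (T + 1) _ (hB T)), hp T]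
        with ω hω hpω
      rw [hω]
      linarith
    have hfail_nonneg : 0 ≤ 1 - p T := by
      obtain ⟨ω, hω, hnonneg⟩ := (hcompl.and (condExp_indicator_one_nonneg (B T)ᶜ)).exists
      exact hnonneg.trans hω
    have hS : MeasurableSet[ℱ T] (⋂ t ∈ Finset.range T, (B t)ᶜ) :=
      MeasurableSet.biInter (Finset.range T).countable_toSet fun t ht =>
        ℱ.mono (Finset.mem_range.mp ht) _ (hB t).compl
    calc μ (⋂ t ∈ Finset.range (T + 1), (B t)ᶜ)
        = μ ((⋂ t ∈ Finset.range T, (B t)ᶜ) ∩ (B T)ᶜ) := by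
          rw [Finset.range_add_one, Finset.set_biInter_insert, Set.inter_comm]
      _ ≤ ENNReal.ofReal (1 - p T) * μ (⋂ t ∈ Finset.range T, (B t)ᶜ) :=
          measure_inter_le_ofReal_mul_of_condExp_indicator_le (ℱ.le T) hS
            (ℱ.le (T + 1) _ (hB T)).compl hcompl
      _ ≤ ENNReal.ofReal (1 - p T) * ENNReal.ofReal (∏ t ∈ Finset.range T, (1 - p t)) := by
          gcongr
      _ = ENNReal.ofReal (∏ t ∈ Finset.range (T + 1), (1 - p t)) := by
          rw [Finset.prod_range_succ, mul_comm, ENNReal.ofReal_mul' hfail_nonneg]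

end MeasureTheory

open MeasureTheory

theorem stmt10_general {Ω Z : Type*} {mΩ : MeasurableSpace Ω} {mZ : MeasurableSpace Z}
    (μ : Measure Ω) [IsProbabilityMeasure μ]
    (π₀ : Measure Z)
    (A : Set Z)
    (H : ℕ → MeasurableSpace Ω) (hHmono : Monotone H) (hHle : ∀ t, H t ≤ mΩ)
    (G B : ℕ → Set Ω)
    (hG : ∀ t, MeasurableSet (G t))
    (hBadapt : ∀ t, MeasurableSet[H (t + 1)] (B t))
    (n : ℕ → ℕ) (α ρ : ℝ) (hρ0 : 0 < ρ)
    (hbridge : ∀ t, ∀ᵐ ω ∂μ, ω ∈ G t →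
      ρ ≤ (μ[Set.indicator (B t) (fun _ => (1 : ℝ)) |
            H t ⊔ MeasurableSpace.generateFrom {G t}]) ω)
    (hsample : ∀ t, ∀ᵐ ω ∂μ,
      1 - (1 - α * (π₀ A).toReal) ^ (n t) ≤
        (μ[Set.indicator (G t) (fun _ => (1 : ℝ)) | H t]) ω) :
    (∀ t, ∀ᵐ ω ∂μ,
      ρ * (μ[Set.indicator (G t) (fun _ => (1 : ℝ)) | H t]) ω ≤
        (μ[Set.indicator (B t) (fun _ => (1 : ℝ)) | H t]) ω) ∧
    ∀ T, μ (⋂ t ∈ Finset.range T, (B t)ᶜ) ≤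
      ENNReal.ofReal (∏ t ∈ Finset.range T,
        (1 - ρ * (1 - (1 - α * (π₀ A).toReal) ^ (n t)))) := by
  have hsup_le : ∀ t, H t ⊔ MeasurableSpace.generateFrom {G t} ≤ mΩ := fun t =>
    sup_le (hHle t) (MeasurableSpace.generateFrom_le fun s hs =>
      Set.mem_singleton_iff.mp hs ▸ hG t)
  have hsuccess : ∀ t, ∀ᵐ ω ∂μ,
      ρ * (μ[Set.indicator (G t) (fun _ => (1 : ℝ)) | H t]) ω ≤
        (μ[Set.indicator (B t) (fun _ => (1 : ℝ)) | H t]) ω := fun t =>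
    ae_mul_condExp_indicator_le_condExp_indicator le_sup_left (hsup_le t) (hG t) (hbridge t)
  refine ⟨hsuccess, measure_biInter_range_compl_le_prod ⟨H, hHmono, hHle⟩ hBadapt fun t => ?_⟩
  filter_upwards [hsample t, hsuccess t] with ω hq hρ
  exact (mul_le_mul_of_nonneg_left hq hρ0.le).trans hρ

/-- under the bridge assumption (conditional on the history H t and
the sampled-good event G t, the success event B t occurs with conditional
probability at least ρ, a.s. on G t), we get
P(B t | H t) ≥ ρ · P(G t | H t), and consequently the probability that B t fails
at every iteration t < T is at most
∏_{t<T} (1 - ρ·[1 - (1 - α·π₀ A)^(n t)]). -/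
theorem stmt10 {Ω Z : Type*} {mΩ : MeasurableSpace Ω} {mZ : MeasurableSpace Z}
    (μ : Measure Ω) [IsProbabilityMeasure μ]
    (π₀ : Measure Z) [IsProbabilityMeasure π₀]
    (A : Set Z) (hA : MeasurableSet A)
    (H : ℕ → MeasurableSpace Ω) (hHmono : Monotone H) (hHle : ∀ t, H t ≤ mΩ)
    (G B : ℕ → Set Ω)
    (hG : ∀ t, MeasurableSet (G t)) (hBmeas : ∀ t, MeasurableSet (B t))
    (hBadapt : ∀ t, MeasurableSet[H (t + 1)] (B t))
    (n : ℕ → ℕ) (α ρ : ℝ) (hα : 0 < α) (hρ0 : 0 < ρ) (hρ1 : ρ ≤ 1)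
    (hbridge : ∀ t, ∀ᵐ ω ∂μ, ω ∈ G t →
      ρ ≤ (μ[Set.indicator (B t) (fun _ => (1 : ℝ)) |
            H t ⊔ MeasurableSpace.generateFrom {G t}]) ω)
    (hsample : ∀ t, ∀ᵐ ω ∂μ,
      1 - (1 - α * (π₀ A).toReal) ^ (n t) ≤
        (μ[Set.indicator (G t) (fun _ => (1 : ℝ)) | H t]) ω) :
    (∀ t, ∀ᵐ ω ∂μ,
      ρ * (μ[Set.indicator (G t) (fun _ => (1 : ℝ)) | H t]) ω ≤
        (μ[Set.indicator (B t) (fun _ => (1 : ℝ)) | H t]) ω) ∧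
    ∀ T, μ (⋂ t ∈ Finset.range T, (B t)ᶜ) ≤
      ENNReal.ofReal (∏ t ∈ Finset.range T,
        (1 - ρ * (1 - (1 - α * (π₀ A).toReal) ^ (n t)))) :=
  stmt10_general (mZ := mZ) μ π₀ A H hHmono hHle G B hG hBadapt n α ρ hρ0 hbridge hsample
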